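/- Let Ψ ∈ S(ℝ^n) with Ψ̂(0) = 0, and set Ψ_j(x) = 2^{jn}Ψ(2^j x) for j ∈ ℤ. Then there is a constant c such that (Σ_{j∈ℤ} |Ψ_j(x-y) - Ψ_j(x)|²)^{1/2} ≤ c |y| / |x|^{n+1} whenever |x| ≥ 2|y|. -/

import Mathlib

/-!
Put `u = 2^j ‖x‖`. The mean value theorem on the ball of radius `2^j ‖y‖` about `2^j x`, all of
whose points have norm at least `u / 2`, together with the Schwartz decay
`(1 + ‖w‖)^(n+2) ‖DΨ(w)‖ ≤ C`, bounds the `j`-th term by `2^(n+2) C ‖y‖ / ‖x‖^(n+1) · min(u, 1/u)`.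
Rescaling `‖x‖` into `[1, 2]` by a power of two, the squares `min(u, 1/u)^2` are dominated by two
geometric series in `j ≥ 0` and `j < 0`, so their sum is at most `4` uniformly in `x`.
-/

open MeasureTheory ENNReal

/-- The dilation `Ψ_j(x) = 2^{jn} Ψ(2^j x)`, `j ∈ ℤ`. -/
noncomputable def dyadicDilate {n : ℕ} (Ψ : SchwartzMap (EuclideanSpace ℝ (Fin n)) ℝ)
    (j : ℤ) (x : EuclideanSpace ℝ (Fin n)) : ℝ :=
  (2 : ℝ) ^ (j * (n : ℤ)) * Ψ ((2 : ℝ) ^ j • x)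

theorem SchwartzMap.exists_one_add_pow_mul_norm_fderiv_le {E F : Type*}
    [NormedAddCommGroup E] [NormedSpace ℝ E] [NormedAddCommGroup F] [NormedSpace ℝ F]
    (f : SchwartzMap E F) (k : ℕ) :
    ∃ C, 0 < C ∧ ∀ w, (1 + ‖w‖) ^ k * ‖fderiv ℝ f w‖ ≤ C := by
  refine ⟨2 ^ k * (Finset.Iic (k, 1)).sup (fun m => SchwartzMap.seminorm ℝ m.1 m.2) f + 1,
    by positivity, fun w => ?_⟩
  rw [← norm_iteratedFDeriv_one (𝕜 := ℝ)]
  exact (one_add_le_sup_seminorm_apply (𝕜 := ℝ) (m := (k, 1)) le_rfl le_rfl f w).trans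
    (le_add_of_nonneg_right zero_le_one)

theorem pow_succ_div_one_add_half_pow_le {u : ℝ} (hu : 0 < u) (m : ℕ) :
    u ^ (m + 1) / (1 + u / 2) ^ (m + 2) ≤ 2 ^ (m + 2) * min u u⁻¹ := by
  rcases le_total u 1 with hu1 | hu1
  · rw [min_eq_left (hu1.trans ((one_le_inv₀ hu).2 hu1))]
    calc u ^ (m + 1) / (1 + u / 2) ^ (m + 2) ≤ u ^ (m + 1) :=
          div_le_self (by positivity) (one_le_pow₀ (by linarith))
      _ ≤ u := pow_le_of_le_one hu.le hu1 (by omega)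
      _ ≤ 2 ^ (m + 2) * u := le_mul_of_one_le_left hu.le (one_le_pow₀ one_le_two)
  · rw [min_eq_right (((inv_le_one₀ hu).2 hu1).trans hu1)]
    calc u ^ (m + 1) / (1 + u / 2) ^ (m + 2) ≤ u ^ (m + 1) / (u / 2) ^ (m + 2) := by
          gcongr; linarith
      _ = 2 ^ (m + 2) * u⁻¹ := by
          rw [div_pow, div_div_eq_mul_div, pow_succ u (m + 1)]
          field_simp

theorem norm_dyadicDilate_sub_le {n : ℕ} (Ψ : SchwartzMap (EuclideanSpace ℝ (Fin n)) ℝ)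
    {x y : EuclideanSpace ℝ (Fin n)} (hxy : 2 * ‖y‖ ≤ ‖x‖) (j : ℤ) {B : ℝ}
    (hB : ∀ w, 2 ^ j * ‖x‖ / 2 ≤ ‖w‖ → ‖fderiv ℝ Ψ w‖ ≤ B) :
    ‖dyadicDilate Ψ j (x - y) - dyadicDilate Ψ j x‖ ≤ (2 ^ j) ^ (n + 1) * ‖y‖ * B := by
  have h2j : (0 : ℝ) < 2 ^ j := zpow_pos two_pos j
  set u := (2 : ℝ) ^ j • x
  set v := (2 : ℝ) ^ j • (x - y)
  have hvu : ‖v - u‖ = 2 ^ j * ‖y‖ := by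
    rw [← smul_sub, sub_sub_cancel_left, norm_smul, norm_neg, Real.norm_of_nonneg h2j.le]
  have hball : ∀ w ∈ Metric.closedBall u ‖v - u‖, ‖fderiv ℝ Ψ w‖ ≤ B := by
    intro w hw
    apply hB
    have hu : ‖u‖ = 2 ^ j * ‖x‖ := by rw [norm_smul, Real.norm_of_nonneg h2j.le]
    have htri : ‖u‖ - ‖w‖ ≤ ‖u - w‖ := norm_sub_norm_le u w
    rw [mem_closedBall_iff_norm', hvu] at hw
    nlinarith
  have hmvt := (convex_closedBall u ‖v - u‖).norm_image_sub_le_of_norm_fderiv_le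
    (fun w _ => Ψ.differentiableAt) hball (Metric.mem_closedBall_self (norm_nonneg _))
    (mem_closedBall_iff_norm.2 le_rfl)
  have hdiff : dyadicDilate Ψ j (x - y) - dyadicDilate Ψ j x = (2 ^ j) ^ n * (Ψ v - Ψ u) := by
    rw [dyadicDilate, dyadicDilate, ← mul_sub, zpow_mul, zpow_natCast]
  rw [hvu] at hmvt
  rw [hdiff, norm_mul, norm_pow, Real.norm_of_nonneg h2j.le]
  calc (2 ^ j) ^ n * ‖Ψ v - Ψ u‖ ≤ (2 ^ j) ^ n * (B * (2 ^ j * ‖y‖)) := by gcongr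
    _ = (2 ^ j) ^ (n + 1) * ‖y‖ * B := by ring

theorem exists_norm_dyadicDilate_sub_le {n : ℕ} (Ψ : SchwartzMap (EuclideanSpace ℝ (Fin n)) ℝ) :
    ∃ K, 0 < K ∧ ∀ x y : EuclideanSpace ℝ (Fin n), x ≠ 0 → 2 * ‖y‖ ≤ ‖x‖ → ∀ j : ℤ,
      ‖dyadicDilate Ψ j (x - y) - dyadicDilate Ψ j x‖ ≤
        K * (‖y‖ / ‖x‖ ^ (n + 1)) * min (2 ^ j * ‖x‖) (2 ^ j * ‖x‖)⁻¹ := by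
  obtain ⟨C, hC, hdecay⟩ := Ψ.exists_one_add_pow_mul_norm_fderiv_le (n + 2)
  refine ⟨2 ^ (n + 2) * C, by positivity, fun x y hx hxy j => ?_⟩
  have hu : 0 < (2 : ℝ) ^ j * ‖x‖ := by positivity
  set u := (2 : ℝ) ^ j * ‖x‖
  have hB : ∀ w, u / 2 ≤ ‖w‖ → ‖fderiv ℝ Ψ w‖ ≤ C / (1 + u / 2) ^ (n + 2) := by
    intro w hw
    rw [le_div_iff₀ (by positivity), mul_comm]
    exact le_trans (by gcongr) (hdecay w)
  calc ‖dyadicDilate Ψ j (x - y) - dyadicDilate Ψ j x‖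
      ≤ (2 ^ j) ^ (n + 1) * ‖y‖ * (C / (1 + u / 2) ^ (n + 2)) :=
        norm_dyadicDilate_sub_le Ψ hxy j hB
    _ = C * (‖y‖ / ‖x‖ ^ (n + 1)) * (u ^ (n + 1) / (1 + u / 2) ^ (n + 2)) := by
        have : ‖x‖ ≠ 0 := norm_ne_zero_iff.2 hx
        rw [mul_pow]
        field_simp
    _ ≤ C * (‖y‖ / ‖x‖ ^ (n + 1)) * (2 ^ (n + 2) * min u u⁻¹) := by
        gcongr
        exact pow_succ_div_one_add_half_pow_le hu n
    _ = 2 ^ (n + 2) * C * (‖y‖ / ‖x‖ ^ (n + 1)) * min u u⁻¹ := by ring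

theorem tsum_ofReal_min_zpow_mul_sq_le_of_one_le_of_le_two {s : ℝ} (hs₁ : 1 ≤ s) (hs₂ : s ≤ 2) :
    ∑' j : ℤ, ENNReal.ofReal (min (2 ^ j * s) (2 ^ j * s)⁻¹) ^ 2 ≤ 4 := by
  have hsq : ∀ {a : ℝ} (k : ℕ), a ≤ 2⁻¹ ^ k → ENNReal.ofReal a ^ 2 ≤ 2⁻¹ ^ k := fun {a} k ha => by
    have : ENNReal.ofReal a ≤ 2⁻¹ ^ k := by
      refine (ENNReal.ofReal_le_ofReal ha).trans_eq ?_
      rw [ENNReal.ofReal_pow (by norm_num), ENNReal.ofReal_inv_of_pos two_pos, ENNReal.ofReal_ofNat]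
    exact (pow_le_of_le_one zero_le (this.trans (pow_le_one₀ zero_le (by norm_num)))
      two_ne_zero).trans this
  rw [tsum_of_nat_of_neg_add_one ENNReal.summable ENNReal.summable,
    show (4 : ℝ≥0∞) = ∑' k : ℕ, 2⁻¹ ^ k + ∑' k : ℕ, 2⁻¹ ^ k by
      rw [ENNReal.tsum_geometric_two]; norm_num]
  refine add_le_add (ENNReal.tsum_le_tsum fun k => ?_) (ENNReal.tsum_le_tsum fun k => ?_)
  · refine hsq k ((min_le_right _ _).trans ?_)
    rw [zpow_natCast, inv_pow]
    gcongr
    exact le_mul_of_one_le_right (by positivity) hs₁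
  · refine hsq k ((min_le_left _ _).trans ?_)
    calc (2 : ℝ) ^ (-((k : ℤ) + 1)) * s ≤ 2 ^ (-((k : ℤ) + 1)) * 2 := by gcongr
      _ = 2⁻¹ ^ k := by
        rw [zpow_neg, show (k : ℤ) + 1 = ((k + 1 : ℕ) : ℤ) by push_cast; ring, zpow_natCast,
          inv_pow, pow_succ]
        field_simp

theorem tsum_ofReal_min_zpow_mul_sq_le {r : ℝ} (hr : 0 < r) :
    ∑' j : ℤ, ENNReal.ofReal (min (2 ^ j * r) (2 ^ j * r)⁻¹) ^ 2 ≤ 4 := by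
  obtain ⟨k, s, hs₁, hs₂, rfl⟩ : ∃ k : ℤ, ∃ s : ℝ, 1 ≤ s ∧ s ≤ 2 ∧ r = 2 ^ k * s := by
    refine ⟨Int.log 2 r, r / 2 ^ Int.log 2 r, ?_, ?_, by field_simp⟩
    · rw [one_le_div (by positivity)]
      exact Int.zpow_log_le_self one_lt_two hr
    · rw [div_le_iff₀ (by positivity), mul_comm, ← zpow_add_one₀ (by norm_num)]
      exact (Int.lt_zpow_succ_log_self one_lt_two r).le
  calc ∑' j : ℤ, ENNReal.ofReal (min (2 ^ j * (2 ^ k * s)) (2 ^ j * (2 ^ k * s))⁻¹) ^ 2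
      = ∑' j : ℤ, ENNReal.ofReal (min (2 ^ (j + k) * s) (2 ^ (j + k) * s)⁻¹) ^ 2 := by
        simp_rw [← mul_assoc, ← zpow_add₀ (two_ne_zero' ℝ)]
    _ = ∑' j : ℤ, ENNReal.ofReal (min (2 ^ j * s) (2 ^ j * s)⁻¹) ^ 2 :=
        (Equiv.addRight k).tsum_eq fun j => ENNReal.ofReal (min (2 ^ j * s) (2 ^ j * s)⁻¹) ^ 2
    _ ≤ 4 := tsum_ofReal_min_zpow_mul_sq_le_of_one_le_of_le_two hs₁ hs₂

theorem tsum_nnnorm_rpow_two_rpow_half_le {a : ℤ → ℝ} {A r : ℝ} (hA : 0 ≤ A) (hr : 0 < r)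
    (ha : ∀ j, ‖a j‖ ≤ A * min (2 ^ j * r) (2 ^ j * r)⁻¹) :
    (∑' j : ℤ, (‖a j‖₊ : ℝ≥0∞) ^ (2 : ℝ)) ^ (1 / (2 : ℝ)) ≤ ENNReal.ofReal (2 * A) := by
  have hterm : ∀ j, (‖a j‖₊ : ℝ≥0∞) ^ 2 ≤
      ENNReal.ofReal A ^ 2 * ENNReal.ofReal (min (2 ^ j * r) (2 ^ j * r)⁻¹) ^ 2 := fun j => by
    rw [← mul_pow, ← ENNReal.ofReal_mul hA, ← enorm_eq_nnnorm, ← ofReal_norm]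
    gcongr
    exact ha j
  rw [one_div, ENNReal.rpow_inv_le_iff two_pos, ENNReal.rpow_two]
  simp_rw [ENNReal.rpow_two]
  calc ∑' j : ℤ, (‖a j‖₊ : ℝ≥0∞) ^ 2
      ≤ ∑' j : ℤ, ENNReal.ofReal A ^ 2 * ENNReal.ofReal (min (2 ^ j * r) (2 ^ j * r)⁻¹) ^ 2 :=
        ENNReal.tsum_le_tsum hterm
    _ = ENNReal.ofReal A ^ 2 * ∑' j : ℤ, ENNReal.ofReal (min (2 ^ j * r) (2 ^ j * r)⁻¹) ^ 2 :=
        ENNReal.tsum_mul_left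
    _ ≤ ENNReal.ofReal A ^ 2 * 4 := by gcongr; exact tsum_ofReal_min_zpow_mul_sq_le hr
    _ = ENNReal.ofReal (2 * A) ^ 2 := by
        rw [ENNReal.ofReal_mul zero_le_two, ENNReal.ofReal_ofNat]
        ring

theorem hormander_condition_general (n : ℕ)
    (Ψ : SchwartzMap (EuclideanSpace ℝ (Fin n)) ℝ) :
    ∃ c : ℝ, 0 < c ∧ ∀ x y : EuclideanSpace ℝ (Fin n), 2 * ‖y‖ ≤ ‖x‖ →
      (∑' j : ℤ, (‖dyadicDilate Ψ j (x - y) - dyadicDilate Ψ j x‖₊ : ℝ≥0∞) ^ (2 : ℝ))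
          ^ (1 / (2 : ℝ))
        ≤ ENNReal.ofReal (c * ‖y‖ / ‖x‖ ^ (n + 1)) := by
  obtain ⟨K, hK, hbound⟩ := exists_norm_dyadicDilate_sub_le Ψ
  refine ⟨2 * K, by positivity, fun x y hxy => ?_⟩
  rcases eq_or_ne x 0 with rfl | hx
  · obtain rfl : y = 0 := norm_le_zero_iff.1 (by rw [norm_zero] at hxy; linarith)
    simp
  calc _ ≤ ENNReal.ofReal (2 * (K * (‖y‖ / ‖x‖ ^ (n + 1)))) :=
        tsum_nnnorm_rpow_two_rpow_half_le (by positivity) (norm_pos_iff.2 hx) (hbound x y hx hxy)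
    _ = ENNReal.ofReal (2 * K * ‖y‖ / ‖x‖ ^ (n + 1)) := by ring_nf

/-- Hörmander regularity of the vector-valued kernel `{Ψ_j}`: for Schwartz `Ψ`
with `Ψ̂(0) = ∫ Ψ = 0`, one has `(Σ_j |Ψ_j(x-y) - Ψ_j(x)|²)^{1/2} ≤ c|y|/|x|^{n+1}`
whenever `|x| ≥ 2|y|`. -/
theorem hormander_condition (n : ℕ) (hn : 0 < n)
    (Ψ : SchwartzMap (EuclideanSpace ℝ (Fin n)) ℝ)
    (hΨ : ∫ x, Ψ x = 0) :
    ∃ c : ℝ, 0 < c ∧ ∀ x y : EuclideanSpace ℝ (Fin n), 2 * ‖y‖ ≤ ‖x‖ →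
      (∑' j : ℤ, (‖dyadicDilate Ψ j (x - y) - dyadicDilate Ψ j x‖₊ : ℝ≥0∞) ^ (2 : ℝ))
          ^ (1 / (2 : ℝ))
        ≤ ENNReal.ofReal (c * ‖y‖ / ‖x‖ ^ (n + 1)) :=
  hormander_condition_general n Ψ
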